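/- arXiv:2604.13664 — 3 statements merged into one kernel-verified Lean document; each statement's English description precedes it below -/
import Mathlib

section
/- The set of dominators of any vertex v (other than the root) is totally ordered by the dominance relation: if d1 and d2 both dominate v, then d1 dominates d2 or d2 dominates d1. -/
/-- A directed path from `s` to `t` given as the list of visited vertices. -/
def IsPath {V : Type*} (E : V → V → Prop) (s t : V) (p : List V) : Prop :=
  p.head? = some s ∧ p.getLast? = some t ∧ p.Chain' E

/-- `t` is reachable from `s`. -/
def Reach {V : Type*} (E : V → V → Prop) (s t : V) : Prop :=
  ∃ p, IsPath E s t p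

/-- `d` dominates `v` (w.r.t. root `r`): every path from `r` to `v` contains `d`. -/
def Dom {V : Type*} (E : V → V → Prop) (r d v : V) : Prop :=
  ∀ p, IsPath E r v p → d ∈ p

/-!
Suppose neither of `d₁`, `d₂` dominates the other, and follow a path from `r` to `v` after its
last visit to `d₂`. If this tail missed `d₁`, a path from `r` to `d₂` avoiding `d₁` followed by
the tail would reach `v` avoiding `d₁`; so the tail meets `d₁`. Continuing from there, the rest
of the tail avoids `d₂`, and a path from `r` to `d₁` avoiding `d₂` followed by it reaches `v`
avoiding `d₂`.
-/

lemma List.exists_eq_append_cons_notMem {α : Type*} {a : α} {l : List α} (h : a ∈ l) :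
    ∃ s t, l = s ++ a :: t ∧ a ∉ t := by
  induction l with
  | nil => simp at h
  | cons b l ih =>
    by_cases ha : a ∈ l
    · obtain ⟨s, t, rfl, hat⟩ := ih ha
      exact ⟨b :: s, t, rfl, hat⟩
    · obtain rfl : a = b := (List.mem_cons.1 h).resolve_right ha
      exact ⟨[], l, rfl, ha⟩

section

variable {V : Type*} {E : V → V → Prop}

lemma IsPath.suffix {s t d : V} {p₁ p₂ : List V} (h : IsPath E s t (p₁ ++ d :: p₂)) :
    IsPath E d t (d :: p₂) :=
  ⟨rfl, List.getLast?_append_cons p₁ d p₂ ▸ h.2.1, h.2.2.suffix ⟨p₁, rfl⟩⟩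

lemma IsPath.append {s d t : V} {q p : List V} (hq : IsPath E s d (q ++ [d]))
    (hp : IsPath E d t (d :: p)) : IsPath E s t (q ++ d :: p) := by
  refine ⟨?_, List.getLast?_append_cons q d p ▸ hp.2.1, ?_⟩
  · cases q <;> simpa using hq.1
  · show List.IsChain E _
    simpa using hq.2.2.append_overlap (l₃ := p) hp.2.2 (List.cons_ne_nil d [])

lemma Dom.mem_of_not_dom {r x d v : V} {p : List V} (hxv : Dom E r x v) (hxd : ¬ Dom E r x d)
    (hp : IsPath E d v (d :: p)) : x ∈ p := by
  obtain ⟨q, hq, hxq⟩ := not_forall₂.1 hxd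
  obtain ⟨q', rfl⟩ := List.getLast?_eq_some_iff.1 hq.2.1
  have hx : x ∈ q' ++ d :: p := hxv _ (hq.append hp)
  simp only [List.mem_append, List.mem_cons] at hx hxq
  tauto

end

theorem dominators_totally_ordered_general {V : Type*} (E : V → V → Prop) (r v d1 d2 : V)
    (hreach : ∀ u, Reach E r u)
    (h1 : Dom E r d1 v) (h2 : Dom E r d2 v) :
    Dom E r d1 d2 ∨ Dom E r d2 d1 := by
  by_contra! ⟨hn12, hn21⟩
  obtain ⟨p, hp⟩ := hreach v
  obtain ⟨_, tail, rfl, hd2⟩ := List.exists_eq_append_cons_notMem (h2 p hp)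
  have hd1 : d1 ∈ tail := h1.mem_of_not_dom hn12 hp.suffix
  obtain ⟨s, rest, rfl, -⟩ := List.exists_eq_append_cons_notMem hd1
  have hd2' : d2 ∈ rest := h2.mem_of_not_dom hn21 (hp.suffix.suffix (p₁ := d2 :: s))
  exact hd2 (List.mem_append_right _ (List.mem_cons_of_mem _ hd2'))

/-- The dominators of any vertex are totally ordered by dominance. -/
theorem dominators_totally_ordered {V : Type*} (E : V → V → Prop) (r v d1 d2 : V)
    (hreach : ∀ u, Reach E r u) (hv : v ≠ r)
    (h1 : Dom E r d1 v) (h2 : Dom E r d2 v) :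
    Dom E r d1 d2 ∨ Dom E r d2 d1 :=
  dominators_totally_ordered_general E r v d1 d2 hreach h1 h2
end

section
/- The dominance relation satisfies the predecessor recurrence: for v ≠ r reachable from r, a vertex d ≠ v dominates v if and only if d dominates every predecessor p of v that is reachable from r. -/
namespace IsPath

variable {V : Type*} {E : V → V → Prop} {s u v : V} {q : List V}

theorem concat (hq : IsPath E s u q) (huv : E u v) : IsPath E s v (q ++ [v]) := by
  obtain ⟨hhead, hlast, hchain⟩ := hq
  refine ⟨by simp [List.head?_append, hhead], List.getLast?_concat, ?_⟩
  exact hchain.append (List.isChain_singleton v) (by simp [hlast, huv])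

theorem exists_pred (hq : IsPath E s v q) (hvs : v ≠ s) :
    ∃ p u, IsPath E s u p ∧ E u v ∧ q = p ++ [v] := by
  obtain ⟨hhead, hlast, hchain⟩ := hq
  rcases q.eq_nil_or_concat' with rfl | ⟨q, w, rfl⟩
  · simp at hhead
  obtain rfl : v = w := by simpa using hlast.symm
  rcases q.eq_nil_or_concat' with rfl | ⟨q, u, rfl⟩
  · exact absurd (by simpa using hhead) hvs
  rw [List.append_assoc] at hchain
  obtain ⟨hchain, huv, -⟩ := List.isChain_append_cons_cons.mp hchain
  refine ⟨q ++ [u], u, ⟨?_, List.getLast?_concat, hchain⟩, huv, rfl⟩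
  simpa [List.head?_append] using hhead

end IsPath

theorem dom_pred_recurrence_general {V : Type*} (E : V → V → Prop) (r v d : V)
    (hvr : v ≠ r) (hdv : d ≠ v) :
    Dom E r d v ↔ ∀ p, E p v → Reach E r p → Dom E r d p := by
  constructor
  · intro hdom u huv _ q hq
    simpa [hdv] using hdom _ (hq.concat huv)
  · intro hpred q hq
    obtain ⟨p, u, hp, huv, rfl⟩ := hq.exists_pred hvr
    exact List.mem_append_left _ (hpred u huv ⟨p, hp⟩ p hp)

/-- The predecessor recurrence for dominance: for `v ≠ r` reachable from `r`,
a vertex `d ≠ v` dominates `v` iff `d` dominates every reachable predecessor of `v`. -/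
theorem dom_pred_recurrence {V : Type*} (E : V → V → Prop) (r v d : V)
    (hv : Reach E r v) (hvr : v ≠ r) (hdv : d ≠ v) :
    Dom E r d v ↔ ∀ p, E p v → Reach E r p → Dom E r d p :=
  dom_pred_recurrence_general E r v d hvr hdv
end

section
/- In a reducible CFG, the bodies of two reducible loops are either disjoint or one is contained in the other; equivalently, loops ordered by body containment form a forest. -/
def ReachIn {V : Type*} (E : V → V → Prop) (B : Set V) (s t : V) : Prop :=
  ∃ p, IsPath E s t p ∧ ∀ x ∈ p, x ∈ B

section Loops

variable {V : Type*} {E : V → V → Prop} {r s t a b h h' : V} {B B' C : Set V}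

theorem IsPath.prefix {x : V} {l₁ l₂ : List V} (hp : IsPath E s t (l₁ ++ x :: l₂)) :
    IsPath E s x (l₁ ++ [x]) := by
  obtain ⟨hs, -, hchain : (l₁ ++ x :: l₂).IsChain E⟩ := hp
  have hchain : ((l₁ ++ [x]) ++ l₂).IsChain E := by simpa using hchain
  refine ⟨?_, by simp, hchain.left_of_append⟩
  cases l₁ <;> simpa using hs

theorem IsPath.mem_or_mem_of_single_entry {p : List V}
    (hentry : ∀ x y, E x y → x ∉ B → y ∈ B → y = h) (hp : IsPath E s t p) (ht : t ∈ B) :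
    s ∈ B ∨ h ∈ p := by
  by_contra! ⟨hs, hh⟩
  obtain ⟨hhead, hlast, hchain : p.IsChain E⟩ := hp
  have hchain' : p.IsChain fun x y => E x y ∧ y ≠ h :=
    hchain.imp_of_mem_imp fun _ _ _ hy hxy => ⟨hxy, by rintro rfl; exact hh hy⟩
  refine hchain'.induction (· ∉ B) p (fun x y ⟨hxy, hy⟩ hx hyB => hy (hentry x y hxy hx hyB))
    (fun hne => (List.head_eq_iff_head?_eq_some hne).2 hhead ▸ hs) t
    (List.mem_of_getLast? hlast) ht

theorem Dom.exists_shorter_path (hab : a ≠ b) (hdom : Dom E r a b) {p : List V}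
    (hp : IsPath E r a p) (hb : b ∈ p) : ∃ q, IsPath E r a q ∧ q.length < p.length := by
  obtain ⟨l₁, l₂, rfl⟩ := List.append_of_mem hb
  have ha : a ∈ l₁ := by simpa [hab] using hdom _ hp.prefix
  obtain ⟨m₁, m₂, rfl⟩ := List.append_of_mem ha
  refine ⟨m₁ ++ [a], IsPath.prefix (l₂ := m₂ ++ b :: l₂) (by simpa using hp), ?_⟩
  simp only [List.length_append, List.length_cons, List.length_nil]
  omega

theorem Dom.antisymm (hr : Reach E r a) (hab : Dom E r a b) (hba : Dom E r b a) : a = b := by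
  by_contra hne
  obtain ⟨p, hp⟩ := hr
  induction hlen : p.length using Nat.strong_induction_on generalizing p with
  | _ n ih =>
    obtain ⟨q, hq, hlt⟩ := hab.exists_shorter_path hne hp (hba p hp)
    exact ih _ (hlen ▸ hlt) q hq rfl

structure IsReducibleLoop (E : V → V → Prop) (r h : V) (B : Set V) : Prop where
  header_mem : h ∈ B
  reachIn : ∀ a ∈ B, ∀ b ∈ B, ReachIn E B a b
  single_entry : ∀ x y, E x y → x ∉ B → y ∈ B → y = h
  dom : ∀ b ∈ B, Dom E r h b

namespace IsReducibleLoop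

theorem mem_or_header_mem_of_reachIn (L : IsReducibleLoop E r h B) (hst : ReachIn E C s t)
    (ht : t ∈ B) : s ∈ B ∨ h ∈ C := by
  obtain ⟨p, hp, hpC⟩ := hst
  exact (hp.mem_or_mem_of_single_entry L.single_entry ht).imp_right (hpC h)

theorem subset_of_header_mem (L : IsReducibleLoop E r h B) (L' : IsReducibleLoop E r h' B')
    (hr : Reach E r h) (hne : h ≠ h') (hh' : h' ∈ B) : B' ⊆ B := fun z hz =>
  (L.mem_or_header_mem_of_reachIn (L'.reachIn z hz h' L'.header_mem) hh').resolve_right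
    fun hh => hne (Dom.antisymm hr (L.dom h' hh') (L'.dom h hh))

end IsReducibleLoop

end Loops

/-- Bodies of two reducible (single-entry, strongly connected) loops are
disjoint or nested. -/
theorem loop_bodies_laminar {V : Type*} (E : V → V → Prop) (r : V)
    (hreach : ∀ v, Reach E r v)
    (h1 h2 : V) (B1 B2 : Set V)
    (hh1 : h1 ∈ B1) (hh2 : h2 ∈ B2)
    (hsc1 : ∀ a ∈ B1, ∀ b ∈ B1, ReachIn E B1 a b)
    (hsc2 : ∀ a ∈ B2, ∀ b ∈ B2, ReachIn E B2 a b)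
    (hentry1 : ∀ x y, E x y → x ∉ B1 → y ∈ B1 → y = h1)
    (hentry2 : ∀ x y, E x y → x ∉ B2 → y ∈ B2 → y = h2)
    (hdom1 : ∀ b ∈ B1, Dom E r h1 b)
    (hdom2 : ∀ b ∈ B2, Dom E r h2 b)
    (hhead : h1 = h2 → B1 = B2) :
    Disjoint B1 B2 ∨ B1 ⊆ B2 ∨ B2 ⊆ B1 := by
  have L1 : IsReducibleLoop E r h1 B1 := ⟨hh1, hsc1, hentry1, hdom1⟩
  have L2 : IsReducibleLoop E r h2 B2 := ⟨hh2, hsc2, hentry2, hdom2⟩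
  by_cases heq : h1 = h2
  · exact Or.inr (Or.inl (hhead heq).subset)
  rcases Set.disjoint_or_nonempty_inter B1 B2 with hdisj | ⟨x, hx1, hx2⟩
  · exact Or.inl hdisj
  rcases L1.mem_or_header_mem_of_reachIn (L2.reachIn h2 hh2 x hx2) hx1 with h2_mem | h1_mem
  · exact Or.inr (Or.inr (L1.subset_of_header_mem L2 (hreach h1) heq h2_mem))
  · exact Or.inr (Or.inl (L2.subset_of_header_mem L1 (hreach h2) (Ne.symm heq) h1_mem))
end
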